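/- Let k ≥ 2 and suppose a^(1), ..., a^(k) ∈ {0, 1, −1}^{2k} satisfy: a^(i)_j = 0 if and only if i = j, and a^(i)_j = −a^(j)_i for all i ≠ j. Identify the vertex set of K_{2k}^(3) with the 2k vectors {±a^(i) : 1 ≤ i ≤ k} (assumed distinct). For each 1 ≤ j ≤ k, let A_j, B_j, C_j consist of the vertices whose j-th coordinate is 1, −1, 0 respectively. Then the k complete 3-partite 3-graphs with parts (A_j, B_j, C_j) form an odd cover of K_{2k}^(3). -/

import Mathlib

open Finset

/-- `e` is an edge of the complete `r`-partite `r`-graph with parts `P 0, ..., P (r-1)`: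
it meets every part in exactly one vertex. -/
def IsEdge {α : Type*} [DecidableEq α] {r : ℕ} (P : Fin r → Finset α) (e : Finset α) : Prop :=
  ∀ i, (e ∩ P i).card = 1

instance {α : Type*} [DecidableEq α] {r : ℕ} (P : Fin r → Finset α) (e : Finset α) :
    Decidable (IsEdge P e) :=
  inferInstanceAs (Decidable (∀ _, _))

private lemma card_filter_triple {α : Type*} [DecidableEq α] (p : α → Prop) [DecidablePred p]
    {v₁ v₂ v₃ : α} (h12 : v₁ ≠ v₂) (h13 : v₁ ≠ v₃) (h23 : v₂ ≠ v₃) :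
    (({v₁, v₂, v₃} : Finset α).filter p).card =
      (if p v₁ then 1 else 0) + (if p v₂ then 1 else 0) + (if p v₃ then 1 else 0) := by
  rw [Finset.filter_insert, Finset.filter_insert, Finset.filter_singleton]
  split_ifs <;> simp_all [Finset.card_insert_of_notMem]

private lemma isEdge_triple_iff {α : Type*} [DecidableEq α] {V : Finset α} {v₁ v₂ v₃ : α}
    (h12 : v₁ ≠ v₂) (h13 : v₁ ≠ v₃) (h23 : v₂ ≠ v₃)
    (m1 : v₁ ∈ V) (m2 : v₂ ∈ V) (m3 : v₃ ∈ V)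
    (g : α → ℤ)
    (hx : g v₁ = 0 ∨ g v₁ = 1 ∨ g v₁ = -1)
    (hy : g v₂ = 0 ∨ g v₂ = 1 ∨ g v₂ = -1)
    (hz : g v₃ = 0 ∨ g v₃ = 1 ∨ g v₃ = -1) :
    IsEdge ![V.filter (fun v => g v = 1), V.filter (fun v => g v = -1),
      V.filter (fun v => g v = 0)] {v₁, v₂, v₃} ↔
      (g v₁ + g v₂ + g v₃ = 0 ∧ ¬(g v₁ = 0 ∧ g v₂ = 0 ∧ g v₃ = 0)) := by
  have key : ∀ (c : ℤ), (({v₁, v₂, v₃} : Finset α) ∩ V.filter (fun v => g v = c)).card =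
      (if g v₁ = c then 1 else 0) + (if g v₂ = c then 1 else 0) + (if g v₃ = c then 1 else 0) := by
    intro c
    have h : ({v₁, v₂, v₃} : Finset α) ∩ V.filter (fun v => g v = c) =
        ({v₁, v₂, v₃} : Finset α).filter (fun v => g v = c) := by
      ext x
      simp only [mem_inter, mem_filter, mem_insert, mem_singleton]
      constructor
      · rintro ⟨h1, _, h2⟩; exact ⟨h1, h2⟩
      · rintro ⟨h1, h2⟩
        refine ⟨h1, ?_, h2⟩
        rcases h1 with h | h | h <;> subst h <;> assumption
    rw [h, card_filter_triple _ h12 h13 h23]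
  have hiff : IsEdge ![V.filter (fun v => g v = 1), V.filter (fun v => g v = -1),
      V.filter (fun v => g v = 0)] {v₁, v₂, v₃} ↔
      ((({v₁, v₂, v₃} : Finset α) ∩ V.filter (fun v => g v = 1)).card = 1 ∧
       (({v₁, v₂, v₃} : Finset α) ∩ V.filter (fun v => g v = -1)).card = 1 ∧
       (({v₁, v₂, v₃} : Finset α) ∩ V.filter (fun v => g v = 0)).card = 1) := by
    constructor
    · intro h; exact ⟨h 0, h 1, h 2⟩
    · rintro ⟨h0, h1, h2⟩ i
      fin_cases i <;> simpa using (by assumption : _)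
  rw [hiff, key, key, key]
  rcases hx with h | h | h <;> rcases hy with h' | h' | h' <;> rcases hz with h'' | h'' | h'' <;>
    rw [h, h', h''] <;> norm_num

private lemma caseB {k : ℕ} (a : Fin k → Fin k → ℤ)
    (hval : ∀ i j, a i j = 0 ∨ a i j = 1 ∨ a i j = -1)
    (hzero : ∀ i j, a i j = 0 ↔ i = j)
    (V : Finset (Fin k → ℤ)) {v₁ v₂ v₃ : Fin k → ℤ}
    (m1 : v₁ ∈ V) (m2 : v₂ ∈ V) (m3 : v₃ ∈ V)
    (h12 : v₁ ≠ v₂) (h13 : v₁ ≠ v₃) (h23 : v₂ ≠ v₃)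
    (i i₃ : Fin k) (ε₁ ε₃ : ℤ) (hε₁ : ε₁ = 1 ∨ ε₁ = -1) (hε₃ : ε₃ = 1 ∨ ε₃ = -1)
    (hne : i₃ ≠ i)
    (hv1 : ∀ j, v₁ j = ε₁ * a i j)
    (hv2 : ∀ j, v₂ j = -(v₁ j))
    (hv3 : ∀ j, v₃ j = ε₃ * a i₃ j) :
    (Finset.univ.filter fun j : Fin k =>
        IsEdge ![V.filter fun v => v j = 1, V.filter fun v => v j = -1,
          V.filter fun v => v j = 0] {v₁, v₂, v₃}).card = 1 := by
  have hvals : ∀ (ε : ℤ) (p j : Fin k), (ε = 1 ∨ ε = -1) →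
      ε * a p j = 0 ∨ ε * a p j = 1 ∨ ε * a p j = -1 := by
    intro ε p j hε
    rcases hε with h | h <;> rcases hval p j with h' | h' | h' <;> rw [h, h'] <;> norm_num
  have hfe : (Finset.univ.filter fun j : Fin k =>
      IsEdge ![V.filter fun v => v j = 1, V.filter fun v => v j = -1,
        V.filter fun v => v j = 0] {v₁, v₂, v₃}) = {i₃} := by
    ext j
    simp only [mem_filter, mem_univ, true_and, mem_singleton]
    rw [isEdge_triple_iff h12 h13 h23 m1 m2 m3 (fun v => v j)
      (show v₁ j = 0 ∨ v₁ j = 1 ∨ v₁ j = -1 by rw [hv1]; exact hvals _ _ _ hε₁)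
      (show v₂ j = 0 ∨ v₂ j = 1 ∨ v₂ j = -1 by
        rw [hv2, hv1]; rcases hvals ε₁ i j hε₁ with h | h | h <;> rw [h] <;> norm_num)
      (show v₃ j = 0 ∨ v₃ j = 1 ∨ v₃ j = -1 by rw [hv3]; exact hvals _ _ _ hε₃)]
    constructor
    · rintro ⟨hsum, -⟩
      have h0 : v₃ j = 0 := by rw [hv2] at hsum; linarith
      rw [hv3] at h0
      have h1 : a i₃ j = 0 := by rcases hε₃ with h | h <;> rw [h] at h0 <;> linarith
      exact ((hzero i₃ j).mp h1).symm
    · rintro rfl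
      constructor
      · rw [hv2, hv3, (hzero j j).mpr rfl]; ring
      · rintro ⟨hz1, -, -⟩
        rw [hv1] at hz1
        have h1 : a i j = 0 := by rcases hε₁ with h | h <;> rw [h] at hz1 <;> linarith
        exact hne ((hzero i j).mp h1).symm
  rw [hfe, Finset.card_singleton]

private lemma caseA {k : ℕ} (a : Fin k → Fin k → ℤ)
    (hval : ∀ i j, a i j = 0 ∨ a i j = 1 ∨ a i j = -1)
    (hzero : ∀ i j, a i j = 0 ↔ i = j)
    (hskew : ∀ i j, i ≠ j → a i j = -(a j i))
    (V : Finset (Fin k → ℤ)) {v₁ v₂ v₃ : Fin k → ℤ}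
    (m1 : v₁ ∈ V) (m2 : v₂ ∈ V) (m3 : v₃ ∈ V)
    (h12 : v₁ ≠ v₂) (h13 : v₁ ≠ v₃) (h23 : v₂ ≠ v₃)
    (i₁ i₂ i₃ : Fin k) (hi12 : i₁ ≠ i₂) (hi13 : i₁ ≠ i₃) (hi23 : i₂ ≠ i₃)
    (ε₁ ε₂ ε₃ : ℤ) (hε₁ : ε₁ = 1 ∨ ε₁ = -1) (hε₂ : ε₂ = 1 ∨ ε₂ = -1) (hε₃ : ε₃ = 1 ∨ ε₃ = -1)
    (hv1 : ∀ j, v₁ j = ε₁ * a i₁ j)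
    (hv2 : ∀ j, v₂ j = ε₂ * a i₂ j)
    (hv3 : ∀ j, v₃ j = ε₃ * a i₃ j) :
    Odd ((Finset.univ.filter fun j : Fin k =>
        IsEdge ![V.filter fun v => v j = 1, V.filter fun v => v j = -1,
          V.filter fun v => v j = 0] {v₁, v₂, v₃}).card) := by
  have hpm : ∀ p q : Fin k, p ≠ q → a p q = 1 ∨ a p q = -1 := by
    intro p q h
    rcases hval p q with h' | h' | h'
    · exact absurd ((hzero p q).mp h') h
    · exact Or.inl h'
    · exact Or.inr h'
  have hvals : ∀ (ε : ℤ) (p j : Fin k), (ε = 1 ∨ ε = -1) →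
      ε * a p j = 0 ∨ ε * a p j = 1 ∨ ε * a p j = -1 := by
    intro ε p j hε
    rcases hε with h | h <;> rcases hval p j with h' | h' | h' <;> rw [h, h'] <;> norm_num
  have hpm' : ∀ (ε : ℤ) (p q : Fin k), (ε = 1 ∨ ε = -1) → p ≠ q →
      ε * a p q = 1 ∨ ε * a p q = -1 := by
    intro ε p q hε h
    rcases hε with h' | h' <;> rcases hpm p q h with h'' | h'' <;> rw [h', h''] <;> norm_num
  -- the three products are ±1
  have pm21 : v₂ i₁ = 1 ∨ v₂ i₁ = -1 := by rw [hv2]; exact hpm' _ _ _ hε₂ (Ne.symm hi12)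
  have pm31 : v₃ i₁ = 1 ∨ v₃ i₁ = -1 := by rw [hv3]; exact hpm' _ _ _ hε₃ (Ne.symm hi13)
  have pm12 : v₁ i₂ = 1 ∨ v₁ i₂ = -1 := by rw [hv1]; exact hpm' _ _ _ hε₁ hi12
  have pm32 : v₃ i₂ = 1 ∨ v₃ i₂ = -1 := by rw [hv3]; exact hpm' _ _ _ hε₃ (Ne.symm hi23)
  have pm13 : v₁ i₃ = 1 ∨ v₁ i₃ = -1 := by rw [hv1]; exact hpm' _ _ _ hε₁ hi13
  have pm23 : v₂ i₃ = 1 ∨ v₂ i₃ = -1 := by rw [hv2]; exact hpm' _ _ _ hε₂ hi23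
  -- the product of the three products is -1
  have hprod : (v₂ i₁ * v₃ i₁) * (v₁ i₂ * v₃ i₂) * (v₁ i₃ * v₂ i₃) = -1 := by
    rw [hv1 i₂, hv1 i₃, hv2 i₁, hv2 i₃, hv3 i₁, hv3 i₂,
      hskew i₂ i₁ (Ne.symm hi12), hskew i₃ i₁ (Ne.symm hi13), hskew i₃ i₂ (Ne.symm hi23)]
    rcases hpm i₁ i₂ hi12 with h1 | h1 <;> rcases hpm i₁ i₃ hi13 with h2 | h2 <;>
      rcases hpm i₂ i₃ hi23 with h3 | h3 <;>
      rcases hε₁ with rfl | rfl <;> rcases hε₂ with rfl | rfl <;> rcases hε₃ with rfl | rfl <;>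
      rw [h1, h2, h3] <;> norm_num
  -- characterize edge-ness by coordinates
  have hE : ∀ j : Fin k, (IsEdge ![V.filter fun v => v j = 1, V.filter fun v => v j = -1,
      V.filter fun v => v j = 0] {v₁, v₂, v₃}) ↔
      (v₁ j + v₂ j + v₃ j = 0 ∧ ¬(v₁ j = 0 ∧ v₂ j = 0 ∧ v₃ j = 0)) := by
    intro j
    exact isEdge_triple_iff h12 h13 h23 m1 m2 m3 (fun v => v j)
      (show v₁ j = 0 ∨ v₁ j = 1 ∨ v₁ j = -1 by rw [hv1]; exact hvals _ _ _ hε₁)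
      (show v₂ j = 0 ∨ v₂ j = 1 ∨ v₂ j = -1 by rw [hv2]; exact hvals _ _ _ hε₂)
      (show v₃ j = 0 ∨ v₃ j = 1 ∨ v₃ j = -1 by rw [hv3]; exact hvals _ _ _ hε₃)
  -- no edge outside {i₁, i₂, i₃}
  have hnot : ∀ j : Fin k, j ≠ i₁ → j ≠ i₂ → j ≠ i₃ →
      ¬ (IsEdge ![V.filter fun v => v j = 1, V.filter fun v => v j = -1,
        V.filter fun v => v j = 0] {v₁, v₂, v₃}) := by
    intro j hj1 hj2 hj3 hE'
    obtain ⟨hsum, -⟩ := (hE j).mp hE'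
    have p1 : v₁ j = 1 ∨ v₁ j = -1 := by rw [hv1]; exact hpm' _ _ _ hε₁ (Ne.symm hj1)
    have p2 : v₂ j = 1 ∨ v₂ j = -1 := by rw [hv2]; exact hpm' _ _ _ hε₂ (Ne.symm hj2)
    have p3 : v₃ j = 1 ∨ v₃ j = -1 := by rw [hv3]; exact hpm' _ _ _ hε₃ (Ne.symm hj3)
    rcases p1 with h | h <;> rcases p2 with h' | h' <;> rcases p3 with h'' | h'' <;>
      rw [h, h', h''] at hsum <;> norm_num at hsum
  -- edge at i₁/i₂/i₃ iff corresponding product is -1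
  have z1 : v₁ i₁ = 0 := by rw [hv1, (hzero i₁ i₁).mpr rfl]; ring
  have z2 : v₂ i₂ = 0 := by rw [hv2, (hzero i₂ i₂).mpr rfl]; ring
  have z3 : v₃ i₃ = 0 := by rw [hv3, (hzero i₃ i₃).mpr rfl]; ring
  have hE1 : (IsEdge ![V.filter fun v => v i₁ = 1, V.filter fun v => v i₁ = -1,
      V.filter fun v => v i₁ = 0] {v₁, v₂, v₃}) ↔ v₂ i₁ * v₃ i₁ = -1 := by
    rw [hE i₁, z1]
    rcases pm21 with h | h <;> rcases pm31 with h' | h' <;> rw [h, h'] <;> norm_num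
  have hE2 : (IsEdge ![V.filter fun v => v i₂ = 1, V.filter fun v => v i₂ = -1,
      V.filter fun v => v i₂ = 0] {v₁, v₂, v₃}) ↔ v₁ i₂ * v₃ i₂ = -1 := by
    rw [hE i₂, z2]
    rcases pm12 with h | h <;> rcases pm32 with h' | h' <;> rw [h, h'] <;> norm_num
  have hE3 : (IsEdge ![V.filter fun v => v i₃ = 1, V.filter fun v => v i₃ = -1,
      V.filter fun v => v i₃ = 0] {v₁, v₂, v₃}) ↔ v₁ i₃ * v₂ i₃ = -1 := by
    rw [hE i₃, z3]
    rcases pm13 with h | h <;> rcases pm23 with h' | h' <;> rw [h, h'] <;> norm_num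
  have hset : (Finset.univ.filter fun j : Fin k =>
      IsEdge ![V.filter fun v => v j = 1, V.filter fun v => v j = -1,
        V.filter fun v => v j = 0] {v₁, v₂, v₃}) =
      ({i₁, i₂, i₃} : Finset (Fin k)).filter (fun j : Fin k =>
      IsEdge ![V.filter fun v => v j = 1, V.filter fun v => v j = -1,
        V.filter fun v => v j = 0] {v₁, v₂, v₃}) := by
    ext j
    simp only [mem_filter, mem_univ, true_and, mem_insert, mem_singleton]
    constructor
    · intro hj
      refine ⟨?_, hj⟩
      by_contra hc
      push_neg at hc
      exact hnot j hc.1 hc.2.1 hc.2.2 hj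
    · exact fun h => h.2
  rw [hset, card_filter_triple _ hi12 hi13 hi23]
  simp only [hE1, hE2, hE3]
  have P1 : v₂ i₁ * v₃ i₁ = 1 ∨ v₂ i₁ * v₃ i₁ = -1 := by
    rcases pm21 with h | h <;> rcases pm31 with h' | h' <;> rw [h, h'] <;> norm_num
  have P2 : v₁ i₂ * v₃ i₂ = 1 ∨ v₁ i₂ * v₃ i₂ = -1 := by
    rcases pm12 with h | h <;> rcases pm32 with h' | h' <;> rw [h, h'] <;> norm_num
  have P3 : v₁ i₃ * v₂ i₃ = 1 ∨ v₁ i₃ * v₂ i₃ = -1 := by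
    rcases pm13 with h | h <;> rcases pm23 with h' | h' <;> rw [h, h'] <;> norm_num
  rcases P1 with h1 | h1 <;> rcases P2 with h2 | h2 <;> rcases P3 with h3 | h3 <;>
    rw [h1, h2, h3] at hprod <;> rw [h1, h2, h3] <;> norm_num at hprod <;> norm_num <;> decide

private lemma keylem {k : ℕ} (a : Fin k → Fin k → ℤ)
    (hval : ∀ i j, a i j = 0 ∨ a i j = 1 ∨ a i j = -1)
    (hzero : ∀ i j, a i j = 0 ↔ i = j)
    (hskew : ∀ i j, i ≠ j → a i j = -(a j i))
    (hinj : Function.Injective (Sum.elim a (fun i => -(a i)) : Fin k ⊕ Fin k → Fin k → ℤ))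
    (s₁ s₂ s₃ : Fin k ⊕ Fin k) (h12 : s₁ ≠ s₂) (h13 : s₁ ≠ s₃) (h23 : s₂ ≠ s₃) :
    Odd ((Finset.univ.filter fun j : Fin k =>
      IsEdge
        ![(Finset.univ.image (Sum.elim a fun i => -(a i))).filter fun v => v j = 1,
          (Finset.univ.image (Sum.elim a fun i => -(a i))).filter fun v => v j = -1,
          (Finset.univ.image (Sum.elim a fun i => -(a i))).filter fun v => v j = 0]
        {Sum.elim a (fun i => -(a i)) s₁, Sum.elim a (fun i => -(a i)) s₂,
          Sum.elim a (fun i => -(a i)) s₃}).card) := by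
  set f : Fin k ⊕ Fin k → Fin k → ℤ := Sum.elim a (fun i => -(a i)) with hf
  set V : Finset (Fin k → ℤ) := Finset.univ.image f with hV
  let ι : Fin k ⊕ Fin k → Fin k := Sum.elim id id
  let ε : Fin k ⊕ Fin k → ℤ := Sum.elim (fun _ => 1) (fun _ => -1)
  have hcoord : ∀ s j, f s j = ε s * a (ι s) j := by
    rintro (s | s) j <;> simp [f, ι, ε]
  have hεpm : ∀ s, ε s = 1 ∨ ε s = -1 := by rintro (s | s) <;> simp [ε]
  have hm : ∀ s, f s ∈ V := fun s => Finset.mem_image_of_mem f (Finset.mem_univ s)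
  have hv12 : f s₁ ≠ f s₂ := fun h => h12 (hinj h)
  have hv13 : f s₁ ≠ f s₃ := fun h => h13 (hinj h)
  have hv23 : f s₂ ≠ f s₃ := fun h => h23 (hinj h)
  -- if two indices agree, the values are opposite
  have hopp : ∀ s t : Fin k ⊕ Fin k, ι s = ι t → f s ≠ f t → ∀ j, f t j = -(f s j) := by
    intro s t hι hne j
    rcases hεpm s with hs | hs <;> rcases hεpm t with ht | ht
    · exact absurd (funext fun j => by rw [hcoord, hcoord, hι, hs, ht]) hne
    · rw [hcoord, hcoord, hι, hs, ht]; ring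
    · rw [hcoord, hcoord, hι, hs, ht]; ring
    · exact absurd (funext fun j => by rw [hcoord, hcoord, hι, hs, ht]) hne
  -- at most two of the indices can agree
  have hthird : ∀ s t u : Fin k ⊕ Fin k, ι s = ι t → f s ≠ f t → f s ≠ f u → f t ≠ f u →
      ι u ≠ ι s := by
    intro s t u hι hst hsu htu hc
    rcases hεpm u with hu | hu
    · rcases hεpm s with hs | hs
      · exact hsu (funext fun j => by rw [hcoord, hcoord, hc, hs, hu])
      · rcases hεpm t with ht | ht
        · exact htu (funext fun j => by rw [hcoord, hcoord, hc, hι, ht, hu])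
        · exact hst (funext fun j => by rw [hcoord, hcoord, hι, hs, ht])
    · rcases hεpm s with hs | hs
      · rcases hεpm t with ht | ht
        · exact hst (funext fun j => by rw [hcoord, hcoord, hι, hs, ht])
        · exact htu (funext fun j => by rw [hcoord, hcoord, hc, hι, ht, hu])
      · exact hsu (funext fun j => by rw [hcoord, hcoord, hc, hs, hu])
  by_cases hI12 : ι s₁ = ι s₂
  · have h3 : ι s₃ ≠ ι s₁ := hthird s₁ s₂ s₃ hI12 hv12 hv13 hv23
    rw [caseB a hval hzero V (hm s₁) (hm s₂) (hm s₃) hv12 hv13 hv23 (ι s₁) (ι s₃) (ε s₁) (ε s₃)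
      (hεpm s₁) (hεpm s₃) h3 (hcoord s₁) (hopp s₁ s₂ hI12 hv12)
      (fun j => by rw [hcoord])]
    decide
  · by_cases hI13 : ι s₁ = ι s₃
    · have h3 : ι s₂ ≠ ι s₁ := hthird s₁ s₃ s₂ hI13 hv13 hv12 hv23.symm
      have hswap : ({f s₁, f s₂, f s₃} : Finset (Fin k → ℤ)) = {f s₁, f s₃, f s₂} := by
        ext x; simp only [Finset.mem_insert, Finset.mem_singleton]; tauto
      simp only [hswap]
      rw [caseB a hval hzero V (hm s₁) (hm s₃) (hm s₂) hv13 hv12 hv23.symm (ι s₁) (ι s₂)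
        (ε s₁) (ε s₂) (hεpm s₁) (hεpm s₂) h3 (hcoord s₁) (hopp s₁ s₃ hI13 hv13)
        (fun j => by rw [hcoord])]
      decide
    · by_cases hI23 : ι s₂ = ι s₃
      · have h3 : ι s₁ ≠ ι s₂ := hthird s₂ s₃ s₁ hI23 hv23 hv12.symm hv13.symm
        have hswap : ({f s₁, f s₂, f s₃} : Finset (Fin k → ℤ)) = {f s₂, f s₃, f s₁} := by
          ext x; simp only [Finset.mem_insert, Finset.mem_singleton]; tauto
        simp only [hswap]
        rw [caseB a hval hzero V (hm s₂) (hm s₃) (hm s₁) hv23 hv12.symm hv13.symm (ι s₂) (ι s₁)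
          (ε s₂) (ε s₁) (hεpm s₂) (hεpm s₁) h3 (hcoord s₂) (hopp s₂ s₃ hI23 hv23)
          (fun j => by rw [hcoord])]
        decide
      · exact caseA a hval hzero hskew V (hm s₁) (hm s₂) (hm s₃) hv12 hv13 hv23
          (ι s₁) (ι s₂) (ι s₃) hI12 hI13 hI23 (ε s₁) (ε s₂) (ε s₃)
          (hεpm s₁) (hεpm s₂) (hεpm s₃) (hcoord s₁) (hcoord s₂) (hcoord s₃)

/-- Given skew vectors `a⁽¹⁾, …, a⁽ᵏ⁾` with entries in `{0, 1, -1}`, zero exactly on the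
diagonal, with the `2k` vectors `±a⁽ⁱ⁾` distinct, the `k` tripartitions by the sign of the
`j`-th coordinate form an odd cover of `K_{2k}^{(3)}` on the vertex set `{±a⁽ⁱ⁾}`. -/
theorem stmt9 (k : ℕ) (hk : 2 ≤ k) (a : Fin k → Fin k → ℤ)
    (hval : ∀ i j, a i j = 0 ∨ a i j = 1 ∨ a i j = -1)
    (hzero : ∀ i j, a i j = 0 ↔ i = j)
    (hskew : ∀ i j, i ≠ j → a i j = -(a j i))
    (hinj : Function.Injective (Sum.elim a (fun i => -(a i)) : Fin k ⊕ Fin k → Fin k → ℤ)) :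
    ∀ e : Finset (Fin k → ℤ),
      e ⊆ Finset.univ.image (Sum.elim a fun i => -(a i)) → e.card = 3 →
      Odd ((Finset.univ.filter fun j : Fin k =>
        IsEdge
          ![(Finset.univ.image (Sum.elim a fun i => -(a i))).filter fun v => v j = 1,
            (Finset.univ.image (Sum.elim a fun i => -(a i))).filter fun v => v j = -1,
            (Finset.univ.image (Sum.elim a fun i => -(a i))).filter fun v => v j = 0] e).card) := by
  intro e hsub hcard
  obtain ⟨v₁, v₂, v₃, h12, h13, h23, rfl⟩ := Finset.card_eq_three.mp hcard
  have m1 : v₁ ∈ Finset.univ.image (Sum.elim a fun i => -(a i)) := hsub (by simp)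
  have m2 : v₂ ∈ Finset.univ.image (Sum.elim a fun i => -(a i)) := hsub (by simp)
  have m3 : v₃ ∈ Finset.univ.image (Sum.elim a fun i => -(a i)) := hsub (by simp)
  obtain ⟨s₁, -, rfl⟩ := Finset.mem_image.mp m1
  obtain ⟨s₂, -, rfl⟩ := Finset.mem_image.mp m2
  obtain ⟨s₃, -, rfl⟩ := Finset.mem_image.mp m3
  exact keylem a hval hzero hskew hinj s₁ s₂ s₃
    (fun h => h12 (congrArg _ h)) (fun h => h13 (congrArg _ h)) (fun h => h23 (congrArg _ h))
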